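/- For every natural number n and all real numbers x, s, one has ∑_{j=0}^{n} (-s)^j · (Nat.choose (2n+1) j) · L (2n+1-2j) x s = x^(2n+1). -/
import Mathlib


/-- Bivariate Lucas polynomials. -/
def L : ℕ → ℝ → ℝ → ℝ
  | 0, _, _ => 2
  | 1, x, _ => x
  | n + 2, x, s => x * L (n + 1) x s + s * L n x s

lemma L_closed (x s : ℝ) (a b : ℂ) (h1 : a + b = (x : ℂ)) (h2 : a * b = -(s : ℂ)) :
    ∀ n, (L n x s : ℂ) = a ^ n + b ^ n
  | 0 => by simp [L]; norm_num
  | 1 => by simp [L, ← h1]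
  | (n + 2) => by
    have ih1 := L_closed x s a b h1 h2 (n + 1)
    have ih0 := L_closed x s a b h1 h2 n
    have : (L (n + 2) x s : ℂ) = (x : ℂ) * L (n + 1) x s + s * L n x s := by
      push_cast [L]; ring
    rw [this, ih1, ih0, ← h1]
    have hs : (s : ℂ) = -(a * b) := by rw [h2]; ring
    rw [hs]; ring

theorem stmt_12 (n : ℕ) (x s : ℝ) :
    ∑ j ∈ Finset.range (n + 1),
        (-s) ^ j * (Nat.choose (2 * n + 1) j : ℝ) * L (2 * n + 1 - 2 * j) x s =
      x ^ (2 * n + 1) := by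
  obtain ⟨r, hr⟩ := IsAlgClosed.exists_pow_nat_eq ((x : ℂ) ^ 2 + 4 * s) (n := 2) zero_lt_two
  set a : ℂ := ((x : ℂ) + r) / 2 with ha
  set b : ℂ := ((x : ℂ) - r) / 2 with hb
  have h1 : a + b = (x : ℂ) := by rw [ha, hb]; ring
  have h2 : a * b = -(s : ℂ) := by
    rw [ha, hb]
    have : ((x : ℂ) + r) / 2 * (((x : ℂ) - r) / 2) = ((x:ℂ)^2 - r^2) / 4 := by ring
    rw [this, hr]; ring
  apply Complex.ofReal_injective
  push_cast
  calc ∑ j ∈ Finset.range (n + 1),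
        (-(s:ℂ)) ^ j * (Nat.choose (2 * n + 1) j : ℂ) * (L (2 * n + 1 - 2 * j) x s : ℂ)
      = ∑ j ∈ Finset.range (n + 1),
        ((Nat.choose (2 * n + 1) j : ℂ) * (a ^ j * b ^ (2*n+1-j))
          + (Nat.choose (2 * n + 1) j : ℂ) * (a ^ (2*n+1-j) * b ^ j)) := by
        apply Finset.sum_congr rfl
        intro j hj
        have hjn : j ≤ n := Nat.lt_succ_iff.mp (Finset.mem_range.mp hj)
        rw [L_closed x s a b h1 h2, ← h2]
        have e1 : 2*n+1-2*j + j = 2*n+1-j := by omega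
        have e2 : 2*n+1-2*j + j = 2*n+1-j := e1
        have : (a*b)^j * (a ^ (2*n+1-2*j) + b ^ (2*n+1-2*j))
            = a ^ (2*n+1-2*j + j) * b ^ j + a ^ j * b ^ (2*n+1-2*j + j) := by
          rw [mul_pow]; ring
        rw [e1] at this
        linear_combination ((Nat.choose (2*n+1) j : ℂ)) * this
    _ = ∑ j ∈ Finset.range (n + 1),
          a ^ j * b ^ (2*n+1-j) * (Nat.choose (2*n+1) j : ℂ)
        + ∑ j ∈ Finset.range (n + 1),
          a ^ (2*n+1-j) * b ^ j * (Nat.choose (2*n+1) j : ℂ) := by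
        rw [← Finset.sum_add_distrib]; apply Finset.sum_congr rfl; intro j _; ring
    _ = ∑ j ∈ Finset.range (2*n + 2),
          a ^ j * b ^ (2*n+1-j) * (Nat.choose (2*n+1) j : ℂ) := by
        conv_rhs => rw [show 2*n+2 = (n+1) + (n+1) by ring,
          Finset.sum_range_add (fun j => a ^ j * b ^ (2*n+1-j) * (Nat.choose (2*n+1) j : ℂ))]
        congr 1
        rw [← Finset.sum_range_reflect (fun j => a ^ (2*n+1-j) * b ^ j *
          (Nat.choose (2*n+1) j : ℂ)) (n+1)]
        apply Finset.sum_congr rfl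
        intro j hj
        have hjn : j ≤ n := Nat.lt_succ_iff.mp (Finset.mem_range.mp hj)
        have e1 : 2*n+1 - (n+1-1-j) = n+1+j := by omega
        have e2 : n+1-1-j = n-j := by omega
        have e3 : Nat.choose (2*n+1) (n-j) = Nat.choose (2*n+1) (n+1+j) := by
          rw [show n+1+j = 2*n+1 - (n-j) by omega]
          exact (Nat.choose_symm (by omega)).symm
        have e4 : 2*n+1 - (n-j) = n+1+j := by omega
        have e5 : n-j = 2*n+1-(n+1+j) := by omega
        rw [e2, e4, e3, e5]
    _ = ((x:ℂ)) ^ (2*n+1) := by rw [← h1, add_pow]
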